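/- arXiv:1802.03695 — 2 statements merged into one kernel-verified Lean document; each statement's English description precedes it below -/
import Mathlib

section
/- Let G be the subgroup of the permutation group of (ZMod 2)⟦X⟧ generated by the four affine bijections A, B, C, D. Then G is isomorphic (as a group) to the rank-2 lamplighter group (ℤ₂ × ℤ₂) ≀ ℤ, i.e., to the semidirect product (⨁_{i : ℤ} (ZMod 2 × ZMod 2)) ⋊ ℤ, where the generator of ℤ acts on the direct sum (equivalently, on finitely supported functions ℤ →₀ (ZMod 2 × ZMod 2)) by shifting the index. -/
open PowerSeries

noncomputable section

/-- The ring of formal power series over the field with two elements. -/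
abbrev R : Type := PowerSeries (ZMod 2)

/-- The multiplier `f = (1+X+X²)·(1+X²)⁻¹`. -/
def f : R := (1 + X + X ^ 2) * (1 + X ^ 2)⁻¹

/-- `g_a = ((1+X)⁻¹)³`. -/
def ga : R := ((1 + X)⁻¹) ^ 3

/-- `g_b = (1+X+X²)·((1+X)⁻¹)³`. -/
def gb : R := (1 + X + X ^ 2) * ((1 + X)⁻¹) ^ 3

/-- `g_c = X·((1+X)⁻¹)³`. -/
def gc : R := X * ((1 + X)⁻¹) ^ 3

/-- `g_d = X²·((1+X)⁻¹)³`. -/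
def gd : R := X ^ 2 * ((1 + X)⁻¹) ^ 3

lemma constantCoeff_f_ne_zero : constantCoeff f ≠ 0 := by
  simp [f, map_mul, map_add, map_pow, PowerSeries.constantCoeff_inv]

/-- `f` as a unit of `R`. -/
def fU : Rˣ := Units.mkOfMulEqOne f f⁻¹ (PowerSeries.mul_inv_cancel f constantCoeff_f_ne_zero)

/-- The affine bijection `h ↦ h·u + g` for a unit `u` and `g : R`. -/
def affine (u : Rˣ) (g : R) : Equiv.Perm R := (Units.mulRight u).trans (Equiv.addRight g)

@[simp] lemma affine_apply (u : Rˣ) (g h : R) : affine u g h = h * u + g := rfl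

/-- The affine bijection `A : h ↦ h·f + g_a`. -/
def A : Equiv.Perm R := affine fU ga

/-- The affine bijection `B : h ↦ h·f + g_b`. -/
def B : Equiv.Perm R := affine fU gb

/-- The affine bijection `C : h ↦ h·f + g_c`. -/
def C : Equiv.Perm R := affine fU gc

/-- The affine bijection `D : h ↦ h·f + g_d`. -/
def D : Equiv.Perm R := affine fU gd

end
noncomputable section

/-- The shift automorphism of `⨁_{i : ℤ} (ZMod 2 × ZMod 2)`, realized as finitely supported
functions `ℤ →₀ (ZMod 2 × ZMod 2)`: the generator of `ℤ` acts by shifting the index. -/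
def shiftEquiv : (ℤ →₀ (ZMod 2 × ZMod 2)) ≃+ (ℤ →₀ (ZMod 2 × ZMod 2)) :=
  Finsupp.domCongr (Equiv.addRight (1 : ℤ))

/-- The action of `ℤ` on the base group by index shifts. -/
def shiftAction : Multiplicative ℤ →* MulAut (Multiplicative (ℤ →₀ (ZMod 2 × ZMod 2))) :=
  zpowersHom _ (AddEquiv.toMultiplicative shiftEquiv)

/-- The rank-2 lamplighter group `(ℤ₂ × ℤ₂) ≀ ℤ`, as the semidirect product
`(⨁_{i : ℤ} (ZMod 2 × ZMod 2)) ⋊ ℤ` with `ℤ` acting by shifting the index. -/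
def Lamplighter : Type :=
  SemidirectProduct (Multiplicative (ℤ →₀ (ZMod 2 × ZMod 2))) (Multiplicative ℤ) shiftAction

instance : Group Lamplighter := SemidirectProduct.instGroup

/-!
Write `t = (1 + X)⁻¹` and `p = 1 + X + X²`, so that `f = p t²`. A lamp configuration
`w : ℤ →₀ 𝔽₂²` gives the series `lampSeries w = ∑ₙ (wₙ.1 t + wₙ.2 t²) fⁿ`, and shifting `w` by
one multiplies it by `f`. Hence `(w, k) ↦ (h ↦ h fᵏ + lampSeries w)` is a homomorphism from the
lamplighter group to the affine permutations of `R`; it sends the move `(w, 1)` to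
`h ↦ h f + lampSeries w`, which is `A`, `B`, `C`, `D` for suitable `wa`, `wb`, `wc`, `wd`.

Translations and dilations meet trivially, so the homomorphism is injective as soon as
`lampSeries` is (applied to single lamps, this also gives that `f` has infinite order). After a
shift, `w` lives on `[0, M]`, and multiplying by `(1 + X)^(2M+2)` turns `lampSeries w = 0` into
`∑ₙ γₙ (1 + X)^(2(M-n)) pⁿ = 0` in `𝔽₂[X]`, with `γₙ = wₙ.1 (1 + X) + wₙ.2`. As `p` is prime of
degree two, it divides neither a nonzero `γₙ` nor `1 + X`, so reading the identity `p`-adically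
forces every `γₙ` to vanish.

The image is all of `⟨A, B, C, D⟩`: `A D⁻¹` and `A C⁻¹` are the two lamps at the origin and
conjugation by `A` shifts lamps, so `A`, `C`, `D` already generate the lamplighter group.
-/

theorem SemidirectProduct.lift_injective {N G H : Type*} [Group N] [Group G] [Group H]
    {φ : G →* MulAut N} {fn : N →* H} {fg : G →* H}
    (h : ∀ g, fn.comp (φ g).toMonoidHom = (MulAut.conj (fg g)).toMonoidHom.comp fn)
    (hn : Function.Injective fn) (hg : Function.Injective fg)
    (hdisj : Disjoint fn.range fg.range) :
    Function.Injective (lift fn fg h) := by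
  rw [injective_iff_map_eq_one]
  intro x hx
  have hright : fg x.right = 1 := by
    refine Subgroup.disjoint_def.mp hdisj ⟨x.left⁻¹, ?_⟩ ⟨x.right, rfl⟩
    rw [map_inv, _root_.inv_eq_iff_mul_eq_one]
    exact hx
  have hleft : fn x.left = 1 := by simpa [lift, hright] using hx
  exact SemidirectProduct.ext ((injective_iff_map_eq_one fn).mp hn _ hleft)
    ((injective_iff_map_eq_one fg).mp hg _ hright)

theorem Prime.eq_zero_of_sum_mul_pow_eq_zero {P : Type*} [CommRing P] [NoZeroDivisors P]
    {p : P} (hp : Prime p) {a : ℕ → P} (ha : ∀ n, p ∣ a n → a n = 0) {M : ℕ}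
    (h : ∑ n ∈ Finset.range M, a n * p ^ n = 0) {n : ℕ} (hn : n < M) : a n = 0 := by
  induction M generalizing a n with
  | zero => exact absurd hn (Nat.not_lt_zero n)
  | succ M ih =>
    have htail : ∑ i ∈ Finset.range M, a (i + 1) * p ^ (i + 1) =
        p * ∑ i ∈ Finset.range M, a (i + 1) * p ^ i := by
      rw [Finset.mul_sum]
      exact Finset.sum_congr rfl fun i _ => by ring
    rw [Finset.sum_range_succ', pow_zero, mul_one, htail] at h
    have h0 : a 0 = 0 :=
      ha 0 ⟨-∑ i ∈ Finset.range M, a (i + 1) * p ^ i, by linear_combination h⟩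
    rw [h0, add_zero, mul_eq_zero] at h
    cases n with
    | zero => exact h0
    | succ n =>
      exact ih (a := fun i => a (i + 1)) (fun i => ha (i + 1)) (h.resolve_left hp.ne_zero)
        (Nat.lt_of_succ_lt_succ hn)

section AffinePerm

variable {S : Type*}

def Equiv.addRightHom [AddCommGroup S] : Multiplicative S →* Equiv.Perm S where
  toFun x := Equiv.addRight x.toAdd
  map_one' := by ext; simp
  map_mul' x y := by ext; simp [add_comm, add_left_comm]

def Units.mulRightHom [CommMonoid S] : Sˣ →* Equiv.Perm S where
  toFun u := Units.mulRight u
  map_one' := by ext; simp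
  map_mul' u v := by ext; simp [mul_left_comm, mul_comm]

@[simp] lemma Equiv.addRightHom_apply [AddCommGroup S] (x : Multiplicative S) (h : S) :
    Equiv.addRightHom x h = h + x.toAdd := rfl

@[simp] lemma Units.mulRightHom_apply [CommMonoid S] (u : Sˣ) (h : S) :
    Units.mulRightHom u h = h * u := rfl

lemma Equiv.addRightHom_injective [AddCommGroup S] :
    Function.Injective (Equiv.addRightHom : Multiplicative S →* _) :=
  fun x y hxy => by simpa using DFunLike.congr_fun hxy 0

lemma Units.mulRightHom_injective [CommMonoid S] :
    Function.Injective (Units.mulRightHom : Sˣ →* Equiv.Perm S) :=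
  fun u v huv => Units.ext (by simpa using DFunLike.congr_fun huv 1)

variable [CommRing S]

lemma Units.mulRightHom_conj_addRightHom (u : Sˣ) (x : Multiplicative S) :
    MulAut.conj (Units.mulRightHom u) (Equiv.addRightHom x) =
      Equiv.addRightHom (.ofAdd (x.toAdd * u)) := by
  rw [MulAut.conj_apply, ← map_inv]
  ext h
  simp only [Equiv.Perm.mul_apply, Units.mulRightHom_apply, Equiv.addRightHom_apply, toAdd_ofAdd]
  rw [add_mul, mul_assoc, Units.inv_mul, mul_one]

lemma disjoint_range_addRightHom_range_mulRightHom :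
    Disjoint (Equiv.addRightHom : Multiplicative S →* _).range
      (Units.mulRightHom : Sˣ →* Equiv.Perm S).range := by
  rw [Subgroup.disjoint_def]
  rintro _ ⟨x, rfl⟩ ⟨u, hu⟩
  have hx : x.toAdd = 0 := by simpa using (DFunLike.congr_fun hu 0).symm
  rw [← ofAdd_toAdd x, hx, ofAdd_zero, map_one]

end AffinePerm

namespace Lamplighter

lemma shiftAction_ofAdd (k : ℤ) :
    shiftAction (.ofAdd k) = AddEquiv.toMultiplicative (Finsupp.domCongr (Equiv.addRight k)) := by
  let ρ : Multiplicative ℤ →* MulAut (Multiplicative (ℤ →₀ ZMod 2 × ZMod 2)) :=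
    { toFun := fun k => AddEquiv.toMultiplicative (Finsupp.domCongr (Equiv.addRight k.toAdd))
      map_one' := by ext x i : 3; simp [← Equiv.Perm.inv_def]
      map_mul' := fun a b => by
        ext x i : 3
        simp [MulAut.mul_apply, ← Equiv.Perm.inv_def, add_assoc, add_comm, add_left_comm] }
  exact DFunLike.congr_fun (MonoidHom.ext_mint (f := shiftAction) (g := ρ) rfl) (.ofAdd k)

def lamp (w : ℤ →₀ ZMod 2 × ZMod 2) : Lamplighter := SemidirectProduct.inl (.ofAdd w)

def shift : Lamplighter :=
  (SemidirectProduct.inr (.ofAdd 1) :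
    Multiplicative (ℤ →₀ ZMod 2 × ZMod 2) ⋊[shiftAction] Multiplicative ℤ)

def move (w : ℤ →₀ ZMod 2 × ZMod 2) : Lamplighter := lamp w * shift

lemma lamp_zero : lamp 0 = 1 := map_one _

lemma lamp_add (w w' : ℤ →₀ ZMod 2 × ZMod 2) : lamp (w + w') = lamp w * lamp w' := map_mul _ _ _

lemma lamp_neg (w : ℤ →₀ ZMod 2 × ZMod 2) : lamp (-w) = (lamp w)⁻¹ := map_inv _ _

lemma lamp_mul_shift_zpow (x : Lamplighter) : lamp x.left.toAdd * shift ^ x.right.toAdd = x := by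
  unfold Lamplighter at x ⊢
  rw [lamp, shift, ← map_zpow, ← ofAdd_zsmul, zsmul_one, Int.cast_id, ofAdd_toAdd, ofAdd_toAdd]
  exact SemidirectProduct.inl_left_mul_inr_right x

lemma move_mul_inv_move (w w' : ℤ →₀ ZMod 2 × ZMod 2) :
    move w * (move w')⁻¹ = lamp (w - w') := by
  rw [move, move, mul_inv_rev, mul_assoc, mul_inv_cancel_left, sub_eq_add_neg, lamp_add, lamp_neg]

lemma shift_mul_lamp_mul_inv (v : ℤ →₀ ZMod 2 × ZMod 2) :
    shift * lamp v * shift⁻¹ = lamp (Finsupp.domCongr (Equiv.addRight 1) v) := by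
  unfold Lamplighter
  rw [lamp, lamp, shift, ← map_inv, ← SemidirectProduct.inl_aut, shiftAction_ofAdd]
  rfl

lemma move_mul_lamp_mul_inv (w v : ℤ →₀ ZMod 2 × ZMod 2) :
    move w * lamp v * (move w)⁻¹ = lamp (Finsupp.domCongr (Equiv.addRight 1) v) := by
  rw [move, mul_inv_rev, show lamp w * shift * lamp v * (shift⁻¹ * (lamp w)⁻¹) =
      lamp w * (shift * lamp v * shift⁻¹) * (lamp w)⁻¹ by group, shift_mul_lamp_mul_inv,
    ← lamp_add, add_comm, lamp_add, mul_inv_cancel_right]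

lemma lamp_single_zero_mem {H : Subgroup Lamplighter}
    (h₁ : lamp (Finsupp.single 0 (1, 0)) ∈ H) (h₂ : lamp (Finsupp.single 0 (0, 1)) ∈ H)
    (v : ZMod 2 × ZMod 2) : lamp (Finsupp.single 0 v) ∈ H := by
  obtain ⟨a, b⟩ := v
  have hsplit : Finsupp.single (0 : ℤ) (a, b) =
      Finsupp.single 0 (a, 0) + Finsupp.single 0 (0, b) := by
    rw [← Finsupp.single_add, Prod.mk_add_mk, add_zero, zero_add]
  rw [hsplit, lamp_add]
  have h01 : ∀ x : ZMod 2, x = 0 ∨ x = 1 := by decide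
  refine H.mul_mem ?_ ?_
  · rcases h01 a with rfl | rfl
    · rw [Prod.mk_zero_zero, Finsupp.single_zero, lamp_zero]
      exact H.one_mem
    · exact h₁
  · rcases h01 b with rfl | rfl
    · rw [Prod.mk_zero_zero, Finsupp.single_zero, lamp_zero]
      exact H.one_mem
    · exact h₂

theorem eq_top_of_move_mem {H : Subgroup Lamplighter} {w : ℤ →₀ ZMod 2 × ZMod 2}
    (hw : move w ∈ H) (hlamp : ∀ v, lamp (Finsupp.single 0 v) ∈ H) : H = ⊤ := by
  have hconj (v : ℤ →₀ ZMod 2 × ZMod 2) :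
      lamp (Finsupp.domCongr (Equiv.addRight 1) v) ∈ H ↔ lamp v ∈ H := by
    rw [← move_mul_lamp_mul_inv w, H.mul_mem_cancel_right (inv_mem hw), H.mul_mem_cancel_left hw]
  have hsingle (k : ℤ) (v) : lamp (Finsupp.single k v) ∈ H := by
    induction k using Int.induction_on with
    | zero => exact hlamp v
    | succ k ih => simpa using (hconj (Finsupp.single k v)).mpr ih
    | pred k ih => simpa using (hconj (Finsupp.single (-k - 1) v)).mp (by simpa using ih)
  have hlamps (v : ℤ →₀ ZMod 2 × ZMod 2) : lamp v ∈ H := by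
    induction v using Finsupp.induction_linear with
    | zero => rw [lamp_zero]; exact H.one_mem
    | add v v' hv hv' => rw [lamp_add]; exact H.mul_mem hv hv'
    | single k v => exact hsingle k v
  have hshift : shift ∈ H := by simpa [move] using H.mul_mem (inv_mem (hlamps w)) hw
  rw [eq_top_iff]
  rintro x -
  rw [← lamp_mul_shift_zpow x]
  exact H.mul_mem (hlamps _) (H.zpow_mem hshift _)

end Lamplighter

namespace R

def t : R := (1 + X)⁻¹

lemma t_mul_one_add_X : t * (1 + X) = 1 := PowerSeries.inv_mul_cancel _ (by simp)

lemma two_eq_zero : (2 : R) = 0 := by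
  rw [← map_ofNat (PowerSeries.C : ZMod 2 →+* R) 2, show (2 : ZMod 2) = 0 by decide, map_zero]

lemma fU_val : (fU : R) = f := rfl

lemma f_eq : f = (1 + X + X ^ 2) * t ^ 2 := by
  have hsq : (1 + X ^ 2 : R) = (1 + X) ^ 2 := by linear_combination (-X : R) * two_eq_zero
  rw [f, PowerSeries.inv_eq_iff_mul_eq_one (by simp) |>.mpr (by
    rw [hsq, ← mul_pow, t_mul_one_add_X, one_pow])]

def p : Polynomial (ZMod 2) := 1 + Polynomial.X + Polynomial.X ^ 2

lemma natDegree_p : p.natDegree = 2 := by unfold p; compute_degree!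

lemma prime_p : Prime p := by
  refine ((Polynomial.irreducible_iff_roots_eq_zero_of_degree_le_three
    natDegree_p.ge (natDegree_p.trans_le (by norm_num))).mpr ?_).prime
  have hno_root : ∀ a : ZMod 2, 1 + a + a ^ 2 ≠ 0 := by decide
  refine Multiset.eq_zero_of_forall_notMem fun a ha => hno_root a ?_
  simpa [p] using (Polynomial.mem_roots'.mp ha).2

lemma eq_zero_of_p_dvd {a : Polynomial (ZMod 2)} (h : p ∣ a) (ha : a.natDegree ≤ 1) : a = 0 :=
  Polynomial.eq_zero_of_dvd_of_natDegree_lt h (by rw [natDegree_p]; omega)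

lemma not_p_dvd_one_add_X : ¬ p ∣ 1 + Polynomial.X := fun h =>
  absurd (congrArg (Polynomial.coeff · 0) (eq_zero_of_p_dvd h (by compute_degree))) (by simp)

end R

namespace Lamplighter

open R

def lampNumerator (v : ZMod 2 × ZMod 2) : Polynomial (ZMod 2) :=
  Polynomial.C v.1 * (1 + Polynomial.X) + Polynomial.C v.2

lemma natDegree_lampNumerator_le {v : ZMod 2 × ZMod 2} : (lampNumerator v).natDegree ≤ 1 := by
  unfold lampNumerator; compute_degree

lemma eq_zero_of_lampNumerator_eq_zero {v : ZMod 2 × ZMod 2} (h : lampNumerator v = 0) :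
    v = 0 := by
  have h1 := congrArg (Polynomial.coeff · 1) h
  have h0 := congrArg (Polynomial.coeff · 0) h
  simp only [lampNumerator, Polynomial.coeff_add, Polynomial.mul_coeff_zero,
    Polynomial.coeff_C_zero, Polynomial.coeff_one, ↓reduceIte, Polynomial.coeff_X_zero, add_zero,
    mul_one, Polynomial.coeff_zero, Polynomial.coeff_C_mul, one_ne_zero, Polynomial.coeff_X_one,
    zero_add, Polynomial.coeff_C_succ] at h0 h1
  ext
  · exact h1
  · simpa [h1] using h0

def lampValue (n : ℤ) : ZMod 2 × ZMod 2 →+ R where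
  toFun v := (v.1 • t + v.2 • t ^ 2) * ↑(fU ^ n)
  map_zero' := by simp
  map_add' v w := by simp only [Prod.fst_add, Prod.snd_add, add_smul]; ring

def lampSeries : (ℤ →₀ ZMod 2 × ZMod 2) →+ R := Finsupp.liftAddHom lampValue

lemma lampSeries_single (n : ℤ) (v : ZMod 2 × ZMod 2) :
    lampSeries (Finsupp.single n v) = (v.1 • t + v.2 • t ^ 2) * ↑(fU ^ n) :=
  Finsupp.liftAddHom_apply_single _ _ _

lemma lampSeries_domCongr (k : ℤ) (w : ℤ →₀ ZMod 2 × ZMod 2) :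
    lampSeries (Finsupp.domCongr (Equiv.addRight k) w) = lampSeries w * ↑(fU ^ k) := by
  suffices lampSeries.comp (Finsupp.domCongr (Equiv.addRight k)).toAddMonoidHom =
      (AddMonoidHom.mulRight _).comp lampSeries from DFunLike.congr_fun this w
  refine Finsupp.addHom_ext fun n v => ?_
  simp [lampSeries_single, zpow_add, mul_assoc]

lemma lampValue_natCast_mul_pow (v : ZMod 2 × ZMod 2) {n M : ℕ} (hn : n ≤ M) :
    lampValue n v * (1 + X) ^ (2 * M + 2) =
      ((lampNumerator v * (1 + Polynomial.X) ^ (2 * (M - n)) * p ^ n : Polynomial (ZMod 2)) :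
        R) := by
  have hval : lampValue n v = (lampNumerator v : R) * (p : R) ^ n * (t ^ 2) ^ (n + 1) := by
    simp only [lampValue, AddMonoidHom.coe_mk, ZeroHom.coe_mk, zpow_natCast,
      Units.val_pow_eq_pow_val, fU_val, f_eq, mul_pow, lampNumerator, p, Polynomial.coe_add,
      Polynomial.coe_mul, Polynomial.coe_C, Polynomial.coe_one, Polynomial.coe_X,
      Polynomial.coe_pow, PowerSeries.smul_eq_C_mul]
    linear_combination
      (-(PowerSeries.C v.1 * t * (1 + X + X ^ 2) ^ n * (t ^ 2) ^ n)) * t_mul_one_add_X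
  have hpow : (1 + X : R) ^ (2 * M + 2) = ((1 + X) ^ 2) ^ (n + 1) * (1 + X) ^ (2 * (M - n)) := by
    rw [← pow_mul, ← pow_add]; congr 1; omega
  have hunit : (t ^ 2) ^ (n + 1) * ((1 + X : R) ^ 2) ^ (n + 1) = 1 := by
    rw [← mul_pow, ← mul_pow, t_mul_one_add_X, one_pow, one_pow]
  rw [hval, hpow]
  simp only [Polynomial.coe_mul, Polynomial.coe_pow, Polynomial.coe_add, Polynomial.coe_one,
    Polynomial.coe_X]
  linear_combination ((lampNumerator v : R) * (p : R) ^ n * (1 + X) ^ (2 * (M - n))) * hunit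

lemma lampSeries_mul_pow {v : ℤ →₀ ZMod 2 × ZMod 2} {M : ℕ}
    (hv : v.support ⊆ (Finset.range (M + 1)).map Nat.castEmbedding) :
    lampSeries v * (1 + X) ^ (2 * M + 2) =
      ((∑ n ∈ Finset.range (M + 1),
        lampNumerator (v n) * (1 + Polynomial.X) ^ (2 * (M - n)) * p ^ n :
          Polynomial (ZMod 2)) : R) := by
  rw [lampSeries, Finsupp.liftAddHom_apply,
    Finsupp.sum_of_support_subset v hv _ (fun n _ => map_zero _), Finset.sum_map,
    Finset.sum_mul, ← Polynomial.coeToPowerSeries.ringHom_apply, map_sum]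
  refine Finset.sum_congr rfl fun n hn => ?_
  rw [Polynomial.coeToPowerSeries.ringHom_apply,
    ← lampValue_natCast_mul_pow _ (Nat.lt_succ_iff.mp (Finset.mem_range.mp hn))]
  rfl

lemma eq_zero_of_lampSeries_eq_zero {v : ℤ →₀ ZMod 2 × ZMod 2} {M : ℕ}
    (hv : v.support ⊆ (Finset.range (M + 1)).map Nat.castEmbedding) (h : lampSeries v = 0) :
    v = 0 := by
  have hpoly : ∑ n ∈ Finset.range (M + 1),
      lampNumerator (v n) * (1 + Polynomial.X) ^ (2 * (M - n)) * p ^ n = 0 := by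
    rw [← Polynomial.coe_eq_zero_iff, ← lampSeries_mul_pow hv, h, zero_mul]
  have hcoeff {n : ℕ} (hn : n < M + 1) : v n = 0 := by
    have hprod := prime_p.eq_zero_of_sum_mul_pow_eq_zero (fun k hk => ?_) hpoly hn
    · rcases mul_eq_zero.mp hprod with hnum | hq
      · exact eq_zero_of_lampNumerator_eq_zero hnum
      · exact absurd (pow_eq_zero_iff'.mp hq).1 fun h => not_p_dvd_one_add_X (h ▸ dvd_zero p)
    · rcases prime_p.dvd_or_dvd hk with hnum | hq
      · rw [eq_zero_of_p_dvd hnum natDegree_lampNumerator_le, zero_mul]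
      · exact absurd (prime_p.dvd_of_dvd_pow hq) not_p_dvd_one_add_X
  ext n : 1
  by_cases hn : n ∈ v.support
  · obtain ⟨k, hk, rfl⟩ := Finset.mem_map.mp (hv hn)
    simpa using hcoeff (Finset.mem_range.mp hk)
  · exact Finsupp.notMem_support_iff.mp hn

theorem lampSeries_injective : Function.Injective lampSeries := by
  rw [injective_iff_map_eq_zero]
  intro w hw
  set N := w.support.sup Int.natAbs
  have hsupp : (Finsupp.domCongr (Equiv.addRight (N : ℤ)) w).support ⊆
      (Finset.range (2 * N + 1)).map Nat.castEmbedding := by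
    intro n hn
    have hmem : n - N ∈ w.support := by simpa [sub_eq_add_neg] using hn
    have := Finset.le_sup (f := Int.natAbs) hmem
    simp only [Finset.mem_map, Finset.mem_range, Nat.castEmbedding_apply]
    exact ⟨n.toNat, by omega, by omega⟩
  have := eq_zero_of_lampSeries_eq_zero hsupp (by rw [lampSeries_domCongr, hw, zero_mul])
  exact (map_eq_zero_iff _ (Finsupp.domCongr _).injective).mp this

lemma zpowersHom_fU_injective : Function.Injective (zpowersHom Rˣ fU) := by
  rw [injective_iff_map_eq_one]
  intro k hk
  have h : lampSeries (Finsupp.single k.toAdd (1, 0)) = lampSeries (Finsupp.single 0 (1, 0)) := by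
    rw [lampSeries_single, lampSeries_single, ← zpowersHom_apply, hk, zpow_zero]
  have hk0 := (Finsupp.single_left_inj (by decide : ((1 : ZMod 2), (0 : ZMod 2)) ≠ 0)).mp
    (lampSeries_injective h)
  rwa [toAdd_eq_zero] at hk0

def toPerm : Lamplighter →* Equiv.Perm R :=
  SemidirectProduct.lift (Equiv.addRightHom.comp (AddMonoidHom.toMultiplicative lampSeries))
    (Units.mulRightHom.comp (zpowersHom Rˣ fU)) fun g => MonoidHom.ext fun x => by
      obtain ⟨k, rfl⟩ : ∃ k : ℤ, Multiplicative.ofAdd k = g := ⟨g.toAdd, rfl⟩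
      simp only [MonoidHom.comp_apply, MulEquiv.coe_toMonoidHom, shiftAction_ofAdd,
        zpowersHom_apply, toAdd_ofAdd, Units.mulRightHom_conj_addRightHom]
      exact congrArg (Equiv.addRightHom ∘ .ofAdd) (lampSeries_domCongr k x.toAdd)

theorem toPerm_injective : Function.Injective toPerm :=
  SemidirectProduct.lift_injective _
    (Equiv.addRightHom_injective.comp <| Multiplicative.ofAdd.injective.comp <|
      lampSeries_injective.comp Multiplicative.toAdd.injective)
    (Units.mulRightHom_injective.comp zpowersHom_fU_injective)
    (disjoint_range_addRightHom_range_mulRightHom.mono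
      ((MonoidHom.range_comp _ _).trans_le (Subgroup.map_le_range _ _))
      ((MonoidHom.range_comp _ _).trans_le (Subgroup.map_le_range _ _)))

lemma toPerm_lamp (w : ℤ →₀ ZMod 2 × ZMod 2) :
    toPerm (lamp w) = Equiv.addRightHom (.ofAdd (lampSeries w)) :=
  SemidirectProduct.lift_inl _ _ _ _

lemma toPerm_shift : toPerm shift = Units.mulRightHom fU :=
  (SemidirectProduct.lift_inr _ _ _ _).trans (by simp)

lemma toPerm_move (w : ℤ →₀ ZMod 2 × ZMod 2) : toPerm (move w) = affine fU (lampSeries w) := by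
  rw [move, map_mul, toPerm_lamp, toPerm_shift]
  rfl

def wa : ℤ →₀ ZMod 2 × ZMod 2 := Finsupp.single 0 (1, 1) + Finsupp.single 1 (1, 0)
def wb : ℤ →₀ ZMod 2 × ZMod 2 := Finsupp.single 1 (1, 0)
def wc : ℤ →₀ ZMod 2 × ZMod 2 := Finsupp.single 0 (1, 0) + Finsupp.single 1 (1, 0)
def wd : ℤ →₀ ZMod 2 × ZMod 2 := Finsupp.single 0 (0, 1) + Finsupp.single 1 (1, 0)

lemma lampSeries_wa : lampSeries wa = ga := by
  simp only [wa, map_add, lampSeries_single, zpow_zero, zpow_one, Units.val_one, fU_val, mul_one,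
    one_smul, zero_smul, add_zero]
  rw [show ga = t ^ 3 from rfl, f_eq]
  linear_combination (X * t ^ 2 + t) * t_mul_one_add_X + t * two_eq_zero

lemma lampSeries_wb : lampSeries wb = gb := by
  simp only [wb, lampSeries_single, zpow_one, fU_val, one_smul, zero_smul, add_zero]
  rw [show gb = (1 + X + X ^ 2) * t ^ 3 from rfl, f_eq]
  ring

lemma lampSeries_wc : lampSeries wc = gc := by
  simp only [wc, map_add, lampSeries_single, zpow_zero, zpow_one, Units.val_one, fU_val, mul_one,
    one_smul, zero_smul, add_zero]
  rw [show gc = X * t ^ 3 from rfl, f_eq]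
  linear_combination (t ^ 2 * (1 + X) + t) * t_mul_one_add_X + (t - X * t ^ 3) * two_eq_zero

lemma lampSeries_wd : lampSeries wd = gd := by
  simp only [wd, map_add, lampSeries_single, zpow_zero, zpow_one, Units.val_one, fU_val, mul_one,
    one_smul, zero_smul, add_zero, zero_add]
  rw [show gd = X ^ 2 * t ^ 3 from rfl, f_eq]
  linear_combination t ^ 2 * t_mul_one_add_X + t ^ 2 * two_eq_zero

lemma wa_sub_wd : wa - wd = Finsupp.single 0 (1, 0) := by
  rw [wa, wd, add_sub_add_right_eq_sub, ← Finsupp.single_sub, Prod.mk_sub_mk, sub_zero, sub_self]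

lemma wa_sub_wc : wa - wc = Finsupp.single 0 (0, 1) := by
  rw [wa, wc, add_sub_add_right_eq_sub, ← Finsupp.single_sub, Prod.mk_sub_mk, sub_zero, sub_self]

end Lamplighter

open Lamplighter in
/-- The subgroup of `Equiv.Perm R` generated by the four affine bijections `A`, `B`, `C`, `D`
is isomorphic to the rank-2 lamplighter group `(ℤ₂ × ℤ₂) ≀ ℤ`. -/
theorem automaton_group_iso_lamplighter :
    Nonempty ((Subgroup.closure ({A, B, _root_.C, D} : Set (Equiv.Perm R))) ≃* Lamplighter) := by
  have hgen : ({A, B, _root_.C, D} : Set (Equiv.Perm R)) =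
      toPerm '' {move wa, move wb, move wc, move wd} := by
    simp only [Set.image_insert_eq, Set.image_singleton, toPerm_move, lampSeries_wa,
      lampSeries_wb, lampSeries_wc, lampSeries_wd]
    rfl
  have hmem {w} (hw : w ∈ ({wa, wb, wc, wd} : Set _)) :
      move w ∈ Subgroup.closure {move wa, move wb, move wc, move wd} :=
    Subgroup.subset_closure (by aesop)
  have htop : Subgroup.closure {move wa, move wb, move wc, move wd} = ⊤ := by
    refine eq_top_of_move_mem (hmem (w := wa) (by simp)) (lamp_single_zero_mem ?_ ?_)
    · rw [← wa_sub_wd, ← move_mul_inv_move]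
      exact mul_mem (hmem (by simp)) (inv_mem (hmem (by simp)))
    · rw [← wa_sub_wc, ← move_mul_inv_move]
      exact mul_mem (hmem (by simp)) (inv_mem (hmem (by simp)))
  rw [hgen, ← MonoidHom.map_closure, htop, ← MonoidHom.range_eq_map]
  exact ⟨(MonoidHom.ofInjective toPerm_injective).symm⟩

end
end

section
/- If q ∈ (ZMod 2)[Y] is a polynomial of degree at least 2, then the degree of the polynomial ψ_q + ψ_{Y·ψ_q} equals (degree of q) − 2. -/
noncomputable section

/-- `φ_0 = 0` and `φ_n = Y + Y² + ⋯ + Yⁿ = ∑_{i=1}^n Yⁱ` for `n ≥ 1`, in `(ZMod 2)[Y]`. -/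
def phi (n : ℕ) : Polynomial (ZMod 2) := ∑ i ∈ Finset.Icc 1 n, Polynomial.X ^ i

/-- For `q = ∑_{i=0}^n c_i Yⁱ` in `(ZMod 2)[Y]` (with `n` the degree of `q`),
`ψ_q = ∑_{i=1}^n c_i φ_{i-1}`. -/
def psi (q : Polynomial (ZMod 2)) : Polynomial (ZMod 2) :=
  ∑ i ∈ Finset.Icc 1 q.natDegree, Polynomial.C (q.coeff i) * phi (i - 1)

end

/-!
For `k ≥ 1` the `k`-th coefficient of `ψ_q` is the tail sum `∑_{i > k} q_i`. Hence `ψ` lowers the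
degree by exactly one, and for `p` without constant term the tail sums of `Y·p` give
`ψ_{Y·p} = p + ψ_p`. As `ψ_q` has no constant term, in characteristic two
`ψ_q + ψ_{Y·ψ_q} = ψ_{ψ_q}`, whose degree is `deg q - 2`.
-/

open Polynomial Finset

lemma coeff_phi (n k : ℕ) : (phi n).coeff k = if k ∈ Icc 1 n then 1 else 0 := by
  simp [phi, coeff_X_pow]

lemma coeff_psi_zero (q : (ZMod 2)[X]) : (psi q).coeff 0 = 0 := by
  simp [psi, finsetSum_coeff, coeff_phi]

lemma coeff_psi_eq_sum_Ioc (q : (ZMod 2)[X]) {k N : ℕ} (hk : 1 ≤ k) (hN : q.natDegree ≤ N) :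
    (psi q).coeff k = ∑ i ∈ Ioc k N, q.coeff i := by
  have hterm : ∀ i ∈ Icc 1 q.natDegree,
      (C (q.coeff i) * phi (i - 1)).coeff k = if i ∈ Ioc k N then q.coeff i else 0 := by
    intro i hi
    rw [mem_Icc] at hi
    simp only [coeff_C_mul, coeff_phi, mem_Icc, mem_Ioc]
    split_ifs <;> first | (exfalso; omega) | simp
  rw [psi, finsetSum_coeff, sum_congr rfl hterm, sum_ite_mem]
  refine sum_subset (fun i hi => ?_) (fun i hi hi' => ?_)
  · simp only [mem_inter, mem_Icc, mem_Ioc] at hi ⊢; omega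
  · simp only [mem_inter, mem_Icc, mem_Ioc, not_and] at hi hi'
    exact coeff_eq_zero_of_natDegree_lt (by omega)

lemma natDegree_psi_le (q : (ZMod 2)[X]) : (psi q).natDegree ≤ q.natDegree - 1 := by
  refine natDegree_le_iff_coeff_eq_zero.mpr fun k hk => ?_
  rw [coeff_psi_eq_sum_Ioc q (by omega) le_rfl, Ioc_eq_empty (by omega), sum_empty]

lemma natDegree_psi (q : (ZMod 2)[X]) : (psi q).natDegree = q.natDegree - 1 := by
  refine le_antisymm (natDegree_psi_le q) ?_
  rcases le_or_gt q.natDegree 1 with h | h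
  · omega
  · have htop : (psi q).coeff (q.natDegree - 1) = q.leadingCoeff := by
      rw [coeff_psi_eq_sum_Ioc q (by omega) le_rfl,
        show Ioc (q.natDegree - 1) q.natDegree = {q.natDegree} by ext; simp; omega,
        sum_singleton, leadingCoeff]
    refine le_natDegree_of_ne_zero ?_
    rw [htop, leadingCoeff_ne_zero]
    rintro rfl
    simp at h

lemma psi_X_mul (p : (ZMod 2)[X]) (hp : p.coeff 0 = 0) : psi (X * p) = p + psi p := by
  ext k
  rcases Nat.eq_zero_or_pos k with rfl | hk
  · simp [coeff_psi_zero, hp]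
  set N := p.natDegree + k
  have hXp : (X * p).natDegree ≤ N + 1 :=
    natDegree_mul_le.trans (by rw [natDegree_X]; omega)
  calc (psi (X * p)).coeff k = ∑ i ∈ Ioc k (N + 1), (X * p).coeff i :=
        coeff_psi_eq_sum_Ioc _ hk hXp
    _ = ∑ j ∈ Icc k N, p.coeff j := by
        rw [← Icc_add_one_left_eq_Ioc, ← map_add_right_Icc, sum_map]
        simp [coeff_X_mul]
    _ = p.coeff k + ∑ j ∈ Ioc k N, p.coeff j := by
        rw [← sum_Ioc_add_eq_sum_Icc (by omega), add_comm]
    _ = (p + psi p).coeff k := by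
        rw [coeff_add, coeff_psi_eq_sum_Ioc p hk (N := N) (by omega)]

lemma psi_add_psi_X_mul_psi (q : (ZMod 2)[X]) : psi q + psi (X * psi q) = psi (psi q) := by
  rw [psi_X_mul _ (coeff_psi_zero q), ← add_assoc, CharTwo.add_self_eq_zero, zero_add]

theorem psi_add_psi_degree_general (q : Polynomial (ZMod 2)) :
    (psi q + psi (Polynomial.X * psi q)).natDegree = q.natDegree - 2 := by
  rw [psi_add_psi_X_mul_psi, natDegree_psi, natDegree_psi]
  omega

/-- If `q` has degree at least `2`, then `ψ_q + ψ_{Y·ψ_q}` has degree `(deg q) − 2`. -/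
theorem psi_add_psi_degree (q : Polynomial (ZMod 2)) (hq : 2 ≤ q.natDegree) :
    (psi q + psi (Polynomial.X * psi q)).natDegree = q.natDegree - 2 :=
  psi_add_psi_degree_general q
end
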